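/- Let f : H → ℝ be convex and differentiable, attaining its minimum value f* at some point x* ∈ H. Let α0 > 0, t0 > 0, ξ1 > 0 with ξ1 ≠ 1/3, let ν2 ≥ 6 + 1/ξ1, and set ν1 = ((1 + ξ1)/ξ1)(ν2 − 2) − (1 + ξ1)/ξ1². Let x : [t0,∞) → H be three times differentiable and satisfy x'''(t) + (ν2/t)x''(t) + (ν1/t²)x'(t) = −α0 ∇f(x(t) + ξ1 t x'(t)) for all t ≥ t0. Then there exists a constant C > 0 such that f(x(t) + ξ1 t x'(t)) − f* ≤ C/t³ for all t ≥ t0, and there exist constants M1, M2 > 0 such that f(x(t)) − f* ≤ M1/t³ + M2/t^{1/ξ1} for all t ≥ t0. -/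

import Mathlib

/-!
Put `u = x + ξ₁ t ẋ`. The third-order equation for `x` is exactly the inertial equation
`t ü + (r + 1) u̇ = -c t² ∇f(u)` with `c = α₀ ξ₁` and `r = ν₂ - 3 - 1/ξ₁ ≥ 3`. Along it the
energy `c t³ (f(u) - f*) + ‖r (u - x*) + t u̇‖² / 2` has derivative
`c t² (3 (f(u) - f*) - r ⟪∇f(u), u - x*⟫)`, which is `≤ 0` by convexity, so
`f(u) - f* = O(t⁻³)`. Convexity between `x` and `u` then gives `φ + ξ₁ t φ' ≤ C / t³` for
`φ = f(x) - f*`; with the integrating factor `t^(1/ξ₁)` this integrates to the second bound (for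
`ξ₁ = 1/3` a logarithm would appear instead).
-/

open InnerProductSpace RealInnerProductSpace Set

section Gradient

variable {H : Type*} [NormedAddCommGroup H] [InnerProductSpace ℝ H] [CompleteSpace H]

theorem HasGradientAt.comp_hasDerivAt {f : H → ℝ} {g : H} {γ : ℝ → H} {γ' : H} {t : ℝ}
    (hf : HasGradientAt f g (γ t)) (hγ : HasDerivAt γ γ' t) :
    HasDerivAt (fun s => f (γ s)) ⟪g, γ'⟫_ℝ t := by
  simpa [Function.comp_def] using hf.hasFDerivAt.comp_hasDerivAt t hγ

theorem ConvexOn.add_inner_le_of_hasGradientAt {f : H → ℝ} {g w : H}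
    (hconv : ConvexOn ℝ univ f) (hf : HasGradientAt f g w) (y : H) :
    f w + ⟪g, y - w⟫_ℝ ≤ f y := by
  have hline : ConvexOn ℝ univ (fun s : ℝ => f (AffineMap.lineMap w y s)) :=
    hconv.comp_affineMap _
  have hderiv : HasDerivAt (fun s : ℝ => f (AffineMap.lineMap w y s)) ⟪g, y - w⟫_ℝ 0 :=
    HasGradientAt.comp_hasDerivAt (by simpa using hf) AffineMap.hasDerivAt_lineMap
  have := hline.le_slope_of_hasDerivAt (mem_univ 0) (mem_univ 1) one_pos hderiv
  simp only [slope_def_field, AffineMap.lineMap_apply_zero, AffineMap.lineMap_apply_one] at this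
  linarith

end Gradient

theorem antitoneOn_Ici_of_hasDerivAt_nonpos {φ φ' : ℝ → ℝ} {t0 : ℝ}
    (hφ : ∀ t, t0 ≤ t → HasDerivAt φ (φ' t) t) (hφ' : ∀ t, t0 ≤ t → φ' t ≤ 0) :
    AntitoneOn φ (Ici t0) := by
  refine antitoneOn_of_hasDerivWithinAt_nonpos (f' := φ') (convex_Ici t0)
    (fun t ht => (hφ t ht).continuousAt.continuousWithinAt) (fun t ht => ?_) (fun t ht => ?_)
  all_goals rw [interior_Ici] at ht
  · exact (hφ t ht.le).hasDerivWithinAt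
  · exact hφ' t ht.le

section Inertial

variable {H : Type*} [NormedAddCommGroup H] [InnerProductSpace ℝ H] [CompleteSpace H]
  {f : H → ℝ} {xs : H} {c r t0 : ℝ} {u u' u'' : ℝ → H}

noncomputable def lyapunovEnergy (f : H → ℝ) (xs : H) (c r : ℝ) (u u' : ℝ → H) (t : ℝ) : ℝ :=
  c * t ^ 3 * (f (u t) - f xs) + ‖r • (u t - xs) + t • u' t‖ ^ 2 / 2

theorem hasDerivAt_lyapunovEnergy (hdiff : Differentiable ℝ f) {t : ℝ}
    (hu : HasDerivAt u (u' t) t) (hu' : HasDerivAt u' (u'' t) t)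
    (hode : (r + 1) • u' t + t • u'' t = -((c * t ^ 2) • gradient f (u t))) :
    HasDerivAt (lyapunovEnergy f xs c r u u')
      (c * t ^ 2 * (3 * (f (u t) - f xs) - r * ⟪gradient f (u t), u t - xs⟫_ℝ)) t := by
  have hanchor : HasDerivAt (fun s => r • (u s - xs) + s • u' s)
      (-((c * t ^ 2) • gradient f (u t))) t := by
    rw [← hode]
    refine (((hu.sub_const xs).const_smul r).add ((hasDerivAt_id' t).smul hu')).congr_deriv ?_
    module
  have hpot := ((hasDerivAt_pow 3 t).const_mul c).mul
    (((hdiff (u t)).hasGradientAt.comp_hasDerivAt hu).sub_const (f xs))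
  refine (hpot.add (hanchor.norm_sq.div_const 2)).congr_deriv ?_
  simp only [inner_add_left, inner_neg_right, real_inner_smul_right,
    real_inner_comm (gradient f (u t))]
  push_cast
  ring

theorem lyapunovEnergy_antitoneOn (hconv : ConvexOn ℝ univ f) (hdiff : Differentiable ℝ f)
    (hmin : ∀ z, f xs ≤ f z) (hc : 0 ≤ c) (hr : 3 ≤ r)
    (hu : ∀ t, t0 ≤ t → HasDerivAt u (u' t) t) (hu' : ∀ t, t0 ≤ t → HasDerivAt u' (u'' t) t)
    (hode : ∀ t, t0 ≤ t → (r + 1) • u' t + t • u'' t = -((c * t ^ 2) • gradient f (u t))) :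
    AntitoneOn (lyapunovEnergy f xs c r u u') (Ici t0) := by
  refine antitoneOn_Ici_of_hasDerivAt_nonpos
    (fun t ht => hasDerivAt_lyapunovEnergy hdiff (hu t ht) (hu' t ht) (hode t ht)) fun t _ => ?_
  have hgap : 0 ≤ f (u t) - f xs := sub_nonneg.2 (hmin (u t))
  have hfirst : f (u t) - f xs ≤ ⟪gradient f (u t), u t - xs⟫_ℝ := by
    have := hconv.add_inner_le_of_hasGradientAt (hdiff (u t)).hasGradientAt xs
    rw [← neg_sub, inner_neg_right] at this
    linarith
  have : 3 * (f (u t) - f xs) ≤ r * ⟪gradient f (u t), u t - xs⟫_ℝ := by nlinarith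
  exact mul_nonpos_of_nonneg_of_nonpos (by positivity) (by linarith)

theorem exists_sub_le_div_cube_of_inertial (hconv : ConvexOn ℝ univ f)
    (hdiff : Differentiable ℝ f) (hmin : ∀ z, f xs ≤ f z) (hc : 0 < c) (hr : 3 ≤ r)
    (ht0 : 0 < t0) (hu : ∀ t, t0 ≤ t → HasDerivAt u (u' t) t)
    (hu' : ∀ t, t0 ≤ t → HasDerivAt u' (u'' t) t)
    (hode : ∀ t, t0 ≤ t → (r + 1) • u' t + t • u'' t = -((c * t ^ 2) • gradient f (u t))) :
    ∃ C, 0 < C ∧ ∀ t, t0 ≤ t → f (u t) - f xs ≤ C / t ^ 3 := by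
  set E := lyapunovEnergy f xs c r u u'
  have hE0 : 0 ≤ E t0 := by
    have := sub_nonneg.2 (hmin (u t0))
    simp only [E, lyapunovEnergy]
    positivity
  refine ⟨(E t0 + 1) / c, by positivity, fun t ht => ?_⟩
  have hdecay : E t ≤ E t0 :=
    lyapunovEnergy_antitoneOn hconv hdiff hmin hc.le hr hu hu' hode self_mem_Ici ht ht
  have hpot : c * t ^ 3 * (f (u t) - f xs) ≤ E t := by
    simp only [E, lyapunovEnergy]
    linarith [sq_nonneg ‖r • (u t - xs) + t • u' t‖]
  have htpos : 0 < t := ht0.trans_le ht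
  rw [le_div_iff₀ (by positivity), le_div_iff₀ hc]
  nlinarith

end Inertial

theorem antitoneOn_rpow_mul_sub_of_add_mul_deriv_le {φ φ' : ℝ → ℝ} {t0 ξ C : ℝ} (ht0 : 0 < t0)
    (hξ : 0 < ξ) (hξ3 : ξ ≠ 1 / 3) (hφ : ∀ t, t0 ≤ t → HasDerivAt φ (φ' t) t)
    (hle : ∀ t, t0 ≤ t → φ t + ξ * t * φ' t ≤ C / t ^ 3) :
    AntitoneOn (fun t => t ^ (1 / ξ) * φ t - C / (1 - 3 * ξ) * t ^ (1 / ξ - 3)) (Ici t0) := by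
  have h3ξ : 1 - ξ * 3 ≠ 0 := fun h => hξ3 (by linarith)
  refine antitoneOn_Ici_of_hasDerivAt_nonpos
    (φ' := fun t => 1 / ξ * t ^ (1 / ξ - 1) * (φ t + ξ * t * φ' t - C / t ^ 3))
    (fun t ht => ?_) (fun t ht => ?_)
  · have htpos : 0 < t := ht0.trans_le ht
    have hpow := fun p => Real.hasDerivAt_rpow_const (p := p) (Or.inl htpos.ne')
    refine (((hpow _).mul (hφ t ht)).sub ((hpow _).const_mul _)).congr_deriv ?_
    have hsucc : t ^ (1 / ξ) = t ^ (1 / ξ - 1) * t := by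
      rw [← Real.rpow_add_one htpos.ne', sub_add_cancel]
    have hsub : t ^ (1 / ξ - 3 - 1) = t ^ (1 / ξ - 1) / t ^ 3 := by
      rw [← Real.rpow_sub_natCast htpos.ne']
      ring_nf
    rw [hsucc, hsub]
    field_simp
  · have htpos : 0 < t := ht0.trans_le ht
    have := hle t ht
    exact mul_nonpos_of_nonneg_of_nonpos (by positivity) (by linarith)

theorem exists_le_div_pow_add_div_rpow_of_add_mul_deriv_le {φ φ' : ℝ → ℝ} {t0 ξ C : ℝ}
    (ht0 : 0 < t0) (hξ : 0 < ξ) (hξ3 : ξ ≠ 1 / 3) (hφ : ∀ t, t0 ≤ t → HasDerivAt φ (φ' t) t)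
    (hle : ∀ t, t0 ≤ t → φ t + ξ * t * φ' t ≤ C / t ^ 3) :
    ∃ M1 M2 : ℝ, 0 < M1 ∧ 0 < M2 ∧ ∀ t, t0 ≤ t → φ t ≤ M1 / t ^ 3 + M2 / t ^ (1 / ξ) := by
  set K := C / (1 - 3 * ξ)
  set ψ := fun t => t ^ (1 / ξ) * φ t - K * t ^ (1 / ξ - 3)
  refine ⟨|K| + 1, |ψ t0| + 1, by positivity, by positivity, fun t ht => ?_⟩
  have htpos : 0 < t := ht0.trans_le ht
  have hdecay : ψ t ≤ ψ t0 :=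
    antitoneOn_rpow_mul_sub_of_add_mul_deriv_le ht0 hξ hξ3 hφ hle self_mem_Ici ht ht
  have hpow : 0 < t ^ (1 / ξ) := Real.rpow_pos_of_pos htpos _
  have hsub : t ^ (1 / ξ - 3) = t ^ (1 / ξ) / t ^ 3 := by
    rw [← Real.rpow_sub_natCast htpos.ne']
    norm_num
  calc φ t = K / t ^ 3 + ψ t / t ^ (1 / ξ) := by
        simp only [ψ, hsub]
        field_simp
        ring
    _ ≤ K / t ^ 3 + ψ t0 / t ^ (1 / ξ) := by gcongr
    _ ≤ (|K| + 1) / t ^ 3 + (|ψ t0| + 1) / t ^ (1 / ξ) := by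
      gcongr <;> linarith [le_abs_self K, le_abs_self (ψ t0)]

theorem inertial_eq_of_third_order_eq {E : Type*} [AddCommGroup E] [Module ℝ E]
    {α ξ ν1 ν2 t : ℝ} (hξ : ξ ≠ 0) (ht : t ≠ 0)
    (hν1 : ν1 = (1 + ξ) / ξ * (ν2 - 2) - (1 + ξ) / ξ ^ 2) {p1 p2 p3 g : E}
    (h : p3 + (ν2 / t) • p2 + (ν1 / t ^ 2) • p1 = -(α • g)) :
    (ν2 - 3 - 1 / ξ + 1) • ((1 + ξ) • p1 + (ξ * t) • p2) +
      t • ((1 + 2 * ξ) • p2 + (ξ * t) • p3) = -((α * ξ * t ^ 2) • g) := by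
  subst hν1
  linear_combination (norm := match_scalars <;> field_simp <;> ring) (ξ * t ^ 2) • h

theorem stmt15
    {H : Type*} [NormedAddCommGroup H] [InnerProductSpace ℝ H] [CompleteSpace H]
    (f : H → ℝ) (hconv : ConvexOn ℝ Set.univ f) (hdiff : Differentiable ℝ f)
    (xs : H) (hmin : ∀ z : H, f xs ≤ f z)
    (α0 t0 ξ1 ν1 ν2 : ℝ) (hα0 : 0 < α0) (ht0 : 0 < t0)
    (hξ1 : 0 < ξ1) (hξ1' : ξ1 ≠ 1 / 3)
    (hν2 : ν2 ≥ 6 + 1 / ξ1)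
    (hν1 : ν1 = (1 + ξ1) / ξ1 * (ν2 - 2) - (1 + ξ1) / ξ1 ^ 2)
    (x : ℝ → H)
    (hx1 : ∀ t, t0 ≤ t → DifferentiableAt ℝ x t)
    (hx2 : ∀ t, t0 ≤ t → DifferentiableAt ℝ (deriv x) t)
    (hx3 : ∀ t, t0 ≤ t → DifferentiableAt ℝ (deriv (deriv x)) t)
    (hode : ∀ t, t0 ≤ t →
      deriv (deriv (deriv x)) t + (ν2 / t) • deriv (deriv x) t +
        (ν1 / t ^ 2) • deriv x t =
      -(α0 • gradient f (x t + (ξ1 * t) • deriv x t))) :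
    (∃ C : ℝ, 0 < C ∧ ∀ t, t0 ≤ t →
      f (x t + (ξ1 * t) • deriv x t) - f xs ≤ C / t ^ 3) ∧
    (∃ M1 M2 : ℝ, 0 < M1 ∧ 0 < M2 ∧ ∀ t, t0 ≤ t →
      f (x t) - f xs ≤ M1 / t ^ 3 + M2 / t ^ (1 / ξ1)) := by
  have hu : ∀ t, t0 ≤ t → HasDerivAt (fun s => x s + (ξ1 * s) • deriv x s)
      ((1 + ξ1) • deriv x t + (ξ1 * t) • deriv (deriv x) t) t := fun t ht =>
    ((hx1 t ht).hasDerivAt.add (((hasDerivAt_id' t).const_mul ξ1).smul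
      (hx2 t ht).hasDerivAt)).congr_deriv (by module)
  have hu' : ∀ t, t0 ≤ t →
      HasDerivAt (fun s => (1 + ξ1) • deriv x s + (ξ1 * s) • deriv (deriv x) s)
      ((1 + 2 * ξ1) • deriv (deriv x) t + (ξ1 * t) • deriv (deriv (deriv x)) t) t := fun t ht =>
    (((hx2 t ht).hasDerivAt.const_smul (1 + ξ1)).add (((hasDerivAt_id' t).const_mul ξ1).smul
      (hx3 t ht).hasDerivAt)).congr_deriv (by module)
  obtain ⟨C, hC, hrate⟩ := exists_sub_le_div_cube_of_inertial hconv hdiff hmin (mul_pos hα0 hξ1)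
    (r := ν2 - 3 - 1 / ξ1) (by linarith) ht0 hu hu'
    fun t ht => inertial_eq_of_third_order_eq hξ1.ne' (ht0.trans_le ht).ne' hν1 (hode t ht)
  refine ⟨⟨C, hC, hrate⟩,
    exists_le_div_pow_add_div_rpow_of_add_mul_deriv_le (C := C) ht0 hξ1 hξ1'
    (fun t ht => ((hdiff _).hasGradientAt.comp_hasDerivAt (hx1 t ht).hasDerivAt).sub_const (f xs))
    fun t ht => ?_⟩
  have hfirst := hconv.add_inner_le_of_hasGradientAt (hdiff (x t)).hasGradientAt
    (x t + (ξ1 * t) • deriv x t)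
  rw [add_sub_cancel_left, real_inner_smul_right] at hfirst
  linarith [hrate t ht]
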